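/- arXiv:0711.3861 — 2 statements merged into one kernel-verified Lean document; each statement's English description precedes it below -/
import Mathlib

section
/- The expected rate of play Q(t) = (v(t) + β)/(v(t) + t·β) is monotonically non-increasing in the integer t ≥ 1, where v(t) = (α/(α+β))·(1 - (1-α-β)^t), assuming 0 < α, 0 < β, α + β ≤ 1. -/
noncomputable def v (α β : ℝ) (t : ℕ) : ℝ := (α / (α + β)) * (1 - (1 - α - β) ^ t)

noncomputable def Q (α β : ℝ) (t : ℕ) : ℝ := (v α β t + β) / (v α β t + t * β)

lemma v_succ (α β : ℝ) (hαβ : α + β ≠ 0) (t : ℕ) :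
    v α β (t + 1) = v α β t + α * (1 - α - β) ^ t := by
  unfold v
  field_simp
  ring

lemma v_nonneg (α β : ℝ) (hα : 0 < α) (hβ : 0 < β) (hαβ : α + β ≤ 1) (t : ℕ) :
    0 ≤ v α β t := by
  have hr0 : (0:ℝ) ≤ 1 - α - β := by linarith
  have hr1 : (1:ℝ) - α - β ≤ 1 := by linarith
  have := pow_le_one₀ hr0 hr1 (n := t)
  have hpos : 0 < α / (α + β) := div_pos hα (by linarith)
  unfold v
  nlinarith

lemma v_ge (α β : ℝ) (hα : 0 < α) (hβ : 0 < β) (hαβ : α + β ≤ 1) (t : ℕ) :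
    (t : ℝ) * α * (1 - α - β) ^ t ≤ v α β t := by
  have hr0 : (0:ℝ) ≤ 1 - α - β := by linarith
  induction t with
  | zero => simp [v]
  | succ n ih =>
    rw [v_succ α β (by positivity) n]
    have h1 : (1 - α - β) ^ (n + 1) ≤ (1 - α - β) ^ n :=
      pow_le_pow_of_le_one hr0 (by linarith) (Nat.le_succ n)
    have h2 : (0:ℝ) ≤ (1 - α - β) ^ (n + 1) := pow_nonneg hr0 _
    have h3 : (n : ℝ) * α * (1 - α - β) ^ (n+1) ≤ (n : ℝ) * α * (1 - α - β) ^ n := by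
      apply mul_le_mul_of_nonneg_left h1 (by positivity)
    push_cast
    nlinarith

lemma Q_step (α β : ℝ) (hα : 0 < α) (hβ : 0 < β) (hαβ : α + β ≤ 1) (t : ℕ) (ht : 1 ≤ t) :
    Q α β (t + 1) ≤ Q α β t := by
  have hr0 : (0:ℝ) ≤ 1 - α - β := by linarith
  have hrt : (0:ℝ) ≤ (1 - α - β) ^ t := pow_nonneg hr0 _
  have hv := v_nonneg α β hα hβ hαβ t
  have hvg := v_ge α β hα hβ hαβ t
  have hvs := v_succ α β (by positivity) t
  have ht1 : (1:ℝ) ≤ (t:ℝ) := by exact_mod_cast ht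
  have hd1 : 0 < v α β t + (t:ℝ) * β := by nlinarith
  have hd2 : 0 < v α β (t+1) + ((t:ℕ)+1 : ℕ) * β := by
    push_cast; rw [hvs]; nlinarith
  unfold Q
  rw [div_le_div_iff₀ (by push_cast at hd2 ⊢; linarith) hd1]
  push_cast
  rw [hvs]
  nlinarith [mul_nonneg hβ.le hrt]

theorem stmt_6 (α β : ℝ) (hα : 0 < α) (hβ : 0 < β) (hαβ : α + β ≤ 1)
    (s t : ℕ) (hs : 1 ≤ s) (hst : s ≤ t) :
    Q α β t ≤ Q α β s := by
  induction t, hst using Nat.le_induction with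
  | base => exact le_refl _
  | succ n hn ih =>
    exact le_trans (Q_step α β hα hβ hαβ n (le_trans hs hn)) ih
end

section
/- If λ ≥ r·α/(α + β·(α+β)), then for every integer t ≥ 1, F(λ,t) = ((r-λ)·v(t) - λ·β)/(v(t) + t·β) ≤ 0, where v(t) = (α/(α+β))·(1-(1-α-β)^t); hence the optimal single-arm policy with penalty λ never plays, and H(λ) = 0 when H is capped below at 0. -/
noncomputable def F (α β r lam : ℝ) (t : ℕ) : ℝ :=
  ((r - lam) * v α β t - lam * β) / (v α β t + t * β)

lemma Fle (α β r lam : ℝ) (hα : 0 < α) (hβ : 0 < β) (hαβ : α + β ≤ 1)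
    (hr : 0 ≤ r) (hlam : lam ≥ r * α / (α + β * (α + β))) :
    ∀ t : ℕ, 1 ≤ t → F α β r lam t ≤ 0 := by
  intro t ht
  have hc : 0 < α + β := by linarith
  have hq0 : 0 ≤ 1 - α - β := by linarith
  have hq1 : 1 - α - β < 1 := by linarith
  have hpow0 : 0 ≤ (1 - α - β) ^ t := pow_nonneg hq0 t
  have hpow1 : (1 - α - β) ^ t ≤ 1 := pow_le_one₀ hq0 (by linarith)
  have hv0 : 0 ≤ v α β t := by
    unfold v
    exact mul_nonneg (div_nonneg hα.le hc.le) (by linarith)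
  have hvle : v α β t ≤ α / (α + β) := by
    unfold v
    have h1 : 1 - (1 - α - β) ^ t ≤ 1 := by linarith
    have := div_pos hα hc
    nlinarith
  have htR : (1 : ℝ) ≤ (t : ℝ) := by exact_mod_cast ht
  have hden : 0 < v α β t + t * β := by nlinarith
  have hlam0 : 0 ≤ lam := by
    have h2 : 0 < α + β * (α + β) := by positivity
    have : 0 ≤ r * α / (α + β * (α + β)) := by positivity
    linarith
  have hnum : (r - lam) * v α β t - lam * β ≤ 0 := by
    rcases le_or_gt r lam with h | h
    · nlinarith
    · have h2 : 0 < α + β * (α + β) := by positivity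
      have hl : r * α ≤ lam * (α + β * (α + β)) := by
        rw [ge_iff_le, div_le_iff₀ h2] at hlam
        linarith
      have h3 : (r - lam) * v α β t ≤ (r - lam) * (α / (α + β)) :=
        mul_le_mul_of_nonneg_left hvle (by linarith)
      have h4 : (r - lam) * (α / (α + β)) ≤ lam * β := by
        rw [mul_div_assoc', div_le_iff₀ hc]
        nlinarith
      linarith
  exact div_nonpos_of_nonpos_of_nonneg hnum hden.le

theorem stmt_11 (α β r lam : ℝ) (hα : 0 < α) (hβ : 0 < β) (hαβ : α + β ≤ 1)
    (hr : 0 ≤ r) (hlam : lam ≥ r * α / (α + β * (α + β))) :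
    (∀ t : ℕ, 1 ≤ t → F α β r lam t ≤ 0) ∧
    max (sSup {x : ℝ | ∃ t : ℕ, 1 ≤ t ∧ x = F α β r lam t}) 0 = 0 := by
  have hF := Fle α β r lam hα hβ hαβ hr hlam
  refine ⟨hF, ?_⟩
  have hne : {x : ℝ | ∃ t : ℕ, 1 ≤ t ∧ x = F α β r lam t}.Nonempty :=
    ⟨F α β r lam 1, 1, le_refl 1, rfl⟩
  have hsup : sSup {x : ℝ | ∃ t : ℕ, 1 ≤ t ∧ x = F α β r lam t} ≤ 0 := by
    apply Real.sSup_le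
    · rintro x ⟨t, ht, rfl⟩; exact hF t ht
    · rfl
  exact max_eq_right hsup
end
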